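/- arXiv:2305.19182 — 2 statements merged into one kernel-verified Lean document; each statement's English description precedes it below -/
import Mathlib

section
/- Let S be a finite set of candidate smooth nodes and CLI a finite set of clients. Given a placement x : S → {0,1} with at least one n such that x n = 1, define for each client m the assignment y m n = 1 iff n is a chosen argmin over {n' : x n' = 1} of ω·(Σ_{l : x l = 1} δ n' l) + ζ m n' (and 0 otherwise). Then for any other assignment y' : CLI → S → {0,1} satisfying Σ_n y' m n = 1 and y' m n ≤ x n for all m, the balance cost C_B(x, y) = Σ_m Σ_n ζ m n · y m n + ω · Σ_n Σ_l x n · x l · (δ n l · Σ_m y m n + ε n l) satisfies C_B(x, y) ≤ C_B(x, y'). -/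
/-!
Because every client is served by a placed node, `x n * y m n = y m n`, so the balance cost is
`∑ m, ∑ n, c m n * y m n` with `c m n = ω * ∑ l, x l * δ n l + ζ m n`, plus a term depending on
`x` only. For each client `m`, `∑ n, c m n * y m n` is an average of values of `c m` at argmin
nodes, hence at most `c m n'` for every placed `n'`; and `∑ n, c m n * y' m n` is an average of
such `c m n'`, hence at least as large.
-/

open Finset

section WeightedAverage

variable {ι R : Type*} [Fintype ι] [CommSemiring R] [PartialOrder R] [IsOrderedRing R]
  {w f : ι → R} {c : R}

theorem sum_mul_le_of_forall_le (hw : ∀ i, 0 ≤ w i) (hw1 : ∑ i, w i = 1)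
    (hf : ∀ i, w i ≠ 0 → f i ≤ c) : ∑ i, f i * w i ≤ c := by
  calc ∑ i, f i * w i ≤ ∑ i, c * w i := by
        refine sum_le_sum fun i _ => ?_
        rcases eq_or_ne (w i) 0 with h | h
        · simp [h]
        · exact mul_le_mul_of_nonneg_right (hf i h) (hw i)
    _ = c := by rw [← mul_sum, hw1, mul_one]

theorem le_sum_mul_of_forall_le (hw : ∀ i, 0 ≤ w i) (hw1 : ∑ i, w i = 1)
    (hf : ∀ i, w i ≠ 0 → c ≤ f i) : c ≤ ∑ i, f i * w i := by
  calc c = ∑ i, c * w i := by rw [← mul_sum, hw1, mul_one]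
    _ ≤ ∑ i, f i * w i := by
        refine sum_le_sum fun i _ => ?_
        rcases eq_or_ne (w i) 0 with h | h
        · simp [h]
        · exact mul_le_mul_of_nonneg_right (hf i h) (hw i)

end WeightedAverage

section BalanceCost

variable {S CLI : Type*} [Fintype S] [Fintype CLI]
  (ζ : CLI → S → ℝ) (δ ε : S → S → ℝ) (ω : ℝ) (x : S → ℝ)

def balanceCost (y : CLI → S → ℝ) : ℝ :=
  (∑ m, ∑ n, ζ m n * y m n) + ω * ∑ n, ∑ l, x n * x l * (δ n l * (∑ m, y m n) + ε n l)

def serviceCost (m : CLI) (n : S) : ℝ :=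
  ω * (∑ l, x l * δ n l) + ζ m n

theorem balanceCost_eq {y : CLI → S → ℝ} (hy : ∀ m n, y m n ≠ 0 → x n = 1) :
    balanceCost ζ δ ε ω x y =
      (∑ m, ∑ n, serviceCost ζ δ ω x m n * y m n) + ω * ∑ n, ∑ l, x n * x l * ε n l := by
  have hxy : ∀ m n, x n * y m n = y m n := fun m n => by
    rcases eq_or_ne (y m n) 0 with h | h
    · rw [h, mul_zero]
    · rw [hy m n h, one_mul]
  have hδ : ∑ n, ∑ l, x n * x l * (δ n l * ∑ m, y m n)
      = ∑ m, ∑ n, (∑ l, x l * δ n l) * y m n := by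
    rw [eq_comm, sum_comm]
    refine sum_congr rfl fun n _ => ?_
    have hY : x n * ∑ m, y m n = ∑ m, y m n := by
      rw [mul_sum]
      exact sum_congr rfl fun m _ => hxy m n
    calc ∑ m, (∑ l, x l * δ n l) * y m n = (∑ l, x l * δ n l) * (x n * ∑ m, y m n) := by
          rw [hY, mul_sum]
      _ = _ := by
          rw [sum_mul]
          exact sum_congr rfl fun l _ => by ring
  have hω : ∑ m, ∑ n, (ω * ∑ l, x l * δ n l) * y m n
      = ω * ∑ m, ∑ n, (∑ l, x l * δ n l) * y m n := by
    simp only [mul_sum, sum_mul, mul_assoc]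
  simp only [balanceCost, serviceCost, mul_add, add_mul, sum_add_distrib, hδ, hω]
  ring

end BalanceCost

theorem eq_one_of_le_of_ne_zero {a b : ℝ} (hb : b = 0 ∨ b = 1) (ha : a = 0 ∨ a = 1)
    (hab : a ≤ b) (ha0 : a ≠ 0) : b = 1 := by
  rcases ha.resolve_left ha0 with rfl
  exact hb.resolve_left fun h => by linarith

theorem stmt_0_general {S CLI : Type*} [Fintype S] [Fintype CLI]
    (ζ : CLI → S → ℝ) (δ ε : S → S → ℝ) (ω : ℝ)
    (x : S → ℝ) (hx : ∀ n, x n = 0 ∨ x n = 1)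
    (y y' : CLI → S → ℝ)
    (hy01 : ∀ m n, y m n = 0 ∨ y m n = 1)
    (hysum : ∀ m, ∑ n, y m n = 1)
    (hyle : ∀ m n, y m n ≤ x n)
    -- y assigns each client to an argmin of ω·(Σ_{l : x l = 1} δ n l) + ζ m n over placed nodes
    (hymin : ∀ m n, y m n = 1 → ∀ n', x n' = 1 →
      ω * (∑ l, x l * δ n l) + ζ m n ≤ ω * (∑ l, x l * δ n' l) + ζ m n')
    (hy'01 : ∀ m n, y' m n = 0 ∨ y' m n = 1)
    (hy'sum : ∀ m, ∑ n, y' m n = 1)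
    (hy'le : ∀ m n, y' m n ≤ x n) :
    (∑ m, ∑ n, ζ m n * y m n) +
      ω * ∑ n, ∑ l, x n * x l * (δ n l * (∑ m, y m n) + ε n l) ≤
    (∑ m, ∑ n, ζ m n * y' m n) +
      ω * ∑ n, ∑ l, x n * x l * (δ n l * (∑ m, y' m n) + ε n l) := by
  have zero_le_of_zero_or_one {z : CLI → S → ℝ} (hz : ∀ m n, z m n = 0 ∨ z m n = 1) m n : 0 ≤ z m n := by
    rcases hz m n with h | h <;> simp [h]
  change balanceCost ζ δ ε ω x y ≤ balanceCost ζ δ ε ω x y'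
  rw [balanceCost_eq ζ δ ε ω x fun m n => eq_one_of_le_of_ne_zero (hx n) (hy01 m n) (hyle m n),
    balanceCost_eq ζ δ ε ω x fun m n => eq_one_of_le_of_ne_zero (hx n) (hy'01 m n) (hy'le m n)]
  refine add_le_add (sum_le_sum fun m _ => ?_) le_rfl
  refine le_sum_mul_of_forall_le (zero_le_of_zero_or_one hy'01 m) (hy'sum m) fun n' hn' => ?_
  have hxn' := eq_one_of_le_of_ne_zero (hx n') (hy'01 m n') (hy'le m n') hn'
  refine sum_mul_le_of_forall_le (zero_le_of_zero_or_one hy01 m) (hysum m) fun n hn => ?_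
  exact hymin m n ((hy01 m n).resolve_left hn) n' hxn'

/-- Optimality of the argmin-based assignment plan (Lemma 1 of the paper). -/
theorem stmt_0 {S CLI : Type*} [Fintype S] [Fintype CLI]
    (ζ : CLI → S → ℝ) (δ ε : S → S → ℝ) (ω : ℝ)
    (hζ : ∀ m n, 0 ≤ ζ m n) (hδ : ∀ n l, 0 ≤ δ n l) (hε : ∀ n l, 0 ≤ ε n l)
    (hω : 0 ≤ ω)
    (x : S → ℝ) (hx : ∀ n, x n = 0 ∨ x n = 1) (hx1 : ∃ n, x n = 1)
    (y y' : CLI → S → ℝ)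
    (hy01 : ∀ m n, y m n = 0 ∨ y m n = 1)
    (hysum : ∀ m, ∑ n, y m n = 1)
    (hyle : ∀ m n, y m n ≤ x n)
    -- y assigns each client to an argmin of ω·(Σ_{l : x l = 1} δ n l) + ζ m n over placed nodes
    (hymin : ∀ m n, y m n = 1 → ∀ n', x n' = 1 →
      ω * (∑ l, x l * δ n l) + ζ m n ≤ ω * (∑ l, x l * δ n' l) + ζ m n')
    (hy'01 : ∀ m n, y' m n = 0 ∨ y' m n = 1)
    (hy'sum : ∀ m, ∑ n, y' m n = 1)
    (hy'le : ∀ m n, y' m n ≤ x n) :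
    (∑ m, ∑ n, ζ m n * y m n) +
      ω * ∑ n, ∑ l, x n * x l * (δ n l * (∑ m, y m n) + ε n l) ≤
    (∑ m, ∑ n, ζ m n * y' m n) +
      ω * ∑ n, ∑ l, x n * x l * (δ n l * (∑ m, y' m n) + ε n l) :=
  stmt_0_general ζ δ ε ω x hx y y' hy01 hysum hyle hymin hy'01 hy'sum hy'le
end

section
/- Let f̂ : Set S → ℝ≥0 be a nonnegative submodular function on a finite set S of size z. Consider the double-greedy random algorithm that processes elements u_1, …, u_z in order, maintaining X_0 = ∅ and Y_0 = S, and at step i sets a_i = f̂(X_{i-1} ∪ {u_i}) − f̂(X_{i-1}), b_i = f̂(Y_{i-1} \ {u_i}) − f̂(Y_{i-1}), a_i' = max(a_i, 0), b_i' = max(b_i, 0), and (with probability a_i'/(a_i'+b_i'), taken to be 1 if a_i' = b_i' = 0) adds u_i to X, else removes u_i from Y. Then X_i ⊆ Y_i for all i, X_z = Y_z, and a_i + b_i ≥ 0 for every i. -/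
open Finset

/-- Deterministic invariants of the double-greedy algorithm of Buchbinder et al.:
X_i ⊆ Y_i throughout, the two solutions coincide at the end, and by submodularity
a_i + b_i ≥ 0 at every step. -/
theorem stmt_19 {α : Type*} [Fintype α] [DecidableEq α]
    (f : Finset α → ℝ)
    (hnonneg : ∀ A : Finset α, 0 ≤ f A)
    (hsubmod : ∀ A B : Finset α, A ⊆ B → ∀ i ∉ B,
      f (insert i B) - f B ≤ f (insert i A) - f A)
    (z : ℕ) (hz : z = Fintype.card α)
    (u : Fin z → α) (hu : Function.Bijective u)
    (X Y : ℕ → Finset α)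
    (hX0 : X 0 = ∅) (hY0 : Y 0 = Finset.univ)
    (hstep : ∀ i : Fin z,
      (X (i + 1) = insert (u i) (X i) ∧ Y (i + 1) = Y i) ∨
      (X (i + 1) = X i ∧ Y (i + 1) = (Y i).erase (u i))) :
    (∀ i : ℕ, i ≤ z → X i ⊆ Y i) ∧
    X z = Y z ∧
    (∀ i : Fin z,
      0 ≤ (f (insert (u i) (X i)) - f (X i)) +
          (f ((Y i).erase (u i)) - f (Y i))) := by
  have key : ∀ i : ℕ, i ≤ z →
      X i ⊆ Y i ∧
      (∀ j : Fin z, i ≤ (j : ℕ) → u j ∉ X i ∧ u j ∈ Y i) ∧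
      (∀ a ∈ Y i, a ∉ X i → ∃ j : Fin z, i ≤ (j : ℕ) ∧ u j = a) := by
    intro i
    induction i with
    | zero =>
      intro _
      refine ⟨by simp [hX0], fun j _ => by simp [hX0, hY0], fun a _ _ => ?_⟩
      obtain ⟨j, hj⟩ := hu.2 a
      exact ⟨j, Nat.zero_le _, hj⟩
    | succ i ih =>
      intro hi
      obtain ⟨hXY, hrem, hcov⟩ := ih (Nat.le_of_succ_le hi)
      set fi : Fin z := ⟨i, hi⟩ with hfi
      have hui : (fi : ℕ) = i := rfl
      rcases hstep fi with ⟨hX', hY'⟩ | ⟨hX', hY'⟩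
      · rw [hui] at hX' hY'
        refine ⟨?_, ?_, ?_⟩
        · rw [hX', hY']
          exact insert_subset (hrem fi le_rfl).2 hXY
        · intro j hj
          have hne : u j ≠ u fi := fun h => by
            have := hu.1 h
            omega
          rw [hX', hY']
          exact ⟨by simp [hne, (hrem j (by omega)).1], (hrem j (by omega)).2⟩
        · intro a haY haX
          rw [hX'] at haX
          rw [hY'] at haY
          simp only [mem_insert, not_or] at haX
          obtain ⟨j, hj, hja⟩ := hcov a haY haX.2
          refine ⟨j, ?_, hja⟩
          have : j ≠ fi := fun h => haX.1 (by rw [← hja, h])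
          have : (j : ℕ) ≠ i := fun h => this (Fin.ext h)
          omega
      · rw [hui] at hX' hY'
        refine ⟨?_, ?_, ?_⟩
        · rw [hX', hY']
          intro a ha
          exact mem_erase.2 ⟨fun h => (hrem fi le_rfl).1 (h ▸ ha), hXY ha⟩
        · intro j hj
          have hne : u j ≠ u fi := fun h => by
            have := hu.1 h
            omega
          rw [hX', hY']
          exact ⟨(hrem j (by omega)).1, mem_erase.2 ⟨hne, (hrem j (by omega)).2⟩⟩
        · intro a haY haX
          rw [hX'] at haX
          rw [hY'] at haY
          obtain ⟨hne, haY'⟩ := mem_erase.1 haY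
          obtain ⟨j, hj, hja⟩ := hcov a haY' haX
          refine ⟨j, ?_, hja⟩
          have : j ≠ fi := fun h => hne (by rw [← hja, h])
          have : (j : ℕ) ≠ i := fun h => this (Fin.ext h)
          omega
  refine ⟨fun i hi => (key i hi).1, ?_, ?_⟩
  · apply Finset.Subset.antisymm (key z le_rfl).1
    intro a ha
    by_contra haX
    obtain ⟨j, hj, _⟩ := (key z le_rfl).2.2 a ha haX
    exact absurd j.2 (by omega)
  · intro i
    obtain ⟨huX, huY⟩ := (key i (le_of_lt i.2)).2.1 i le_rfl
    have hsub : X (i : ℕ) ⊆ (Y (i : ℕ)).erase (u i) := fun a ha =>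
      mem_erase.2 ⟨fun h => huX (h ▸ ha), (key i (le_of_lt i.2)).1 ha⟩
    have hnot : u i ∉ (Y (i : ℕ)).erase (u i) := notMem_erase _ _
    have := hsubmod _ _ hsub (u i) hnot
    rw [insert_erase huY] at this
    linarith
end
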